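/- arXiv:1605.00786 — 3 statements merged into one kernel-verified Lean document; each statement's English description precedes it below -/
import Mathlib

section
/- For integers N ≥ 1, M > N, and d ≥ 2, the strict inequality (M - N + N(M+d)) / (M(N+d)) > (N+1)/(N+d) holds. -/
/-! The cloning fidelity exceeds the estimation fidelity by exactly `N (d - 1) / (M (N + d))`,
which is positive as soon as `N ≥ 1`, `d ≥ 2` and `M > 0`. -/

theorem cloning_sub_estimation_fidelity {K : Type*} [Field K] (N M d : K) (hM : M ≠ 0)
    (hNd : N + d ≠ 0) :
    (M - N + N * (M + d)) / (M * (N + d)) - (N + 1) / (N + d) = N * (d - 1) / (M * (N + d)) := by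
  field_simp
  ring

theorem uqcm_gt_estimation (N M d : ℤ) (hN : 1 ≤ N) (hNM : N < M) (hd : 2 ≤ d) :
    ((M : ℝ) - N + N * (M + d)) / (M * (N + d)) > ((N : ℝ) + 1) / (N + d) := by
  have hN' : (0 : ℝ) < N := by exact_mod_cast hN
  have hM : (0 : ℝ) < M := by exact_mod_cast zero_lt_one.trans (hN.trans_lt hNM)
  have hd' : (0 : ℝ) < d - 1 := by
    rw [sub_pos]
    exact_mod_cast hd
  have hNd : (0 : ℝ) < N + d := by linarith
  rw [gt_iff_lt, ← sub_pos, cloning_sub_estimation_fidelity _ _ _ hM.ne' hNd.ne']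
  positivity
end

section
/- For every integer d ≥ 2, the inequality 1/d + (1/(4d))·(d - 2 + sqrt(d² + 4d - 4)) > (d+3)/(2(d+1)) holds. -/
/-! Writing `s = √(d² + 4d - 4)`, the left-hand side is `(d + 2 + s) / (4d)`, and clearing
denominators reduces the claim to `d² + 3d - 2 < (d + 1) s`. Both sides are positive, and
squaring leaves `(d + 1)² (d² + 4d - 4) - (d² + 3d - 2)² = 8 (d - 1) > 0`. -/

lemma one_div_add_one_div_four_mul_mul (d s : ℝ) (hd : d ≠ 0) :
    1 / d + 1 / (4 * d) * (d - 2 + s) = (d + 2 + s) / (4 * d) := by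
  field_simp
  ring

lemma sq_add_three_mul_sub_two_lt_add_one_mul_sqrt {d : ℝ} (hd : 1 < d) :
    d ^ 2 + 3 * d - 2 < (d + 1) * √(d ^ 2 + 4 * d - 4) := by
  have hrad : 0 ≤ d ^ 2 + 4 * d - 4 := by nlinarith
  refine lt_of_pow_lt_pow_left₀ 2 (by positivity) ?_
  rw [mul_pow, Real.sq_sqrt hrad]
  nlinarith

lemma pqcm_fidelity_gt_uqcm_fidelity {d : ℝ} (hd : 1 < d) :
    1 / d + 1 / (4 * d) * (d - 2 + √(d ^ 2 + 4 * d - 4)) > (d + 3) / (2 * (d + 1)) := by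
  rw [one_div_add_one_div_four_mul_mul d _ (by positivity), gt_iff_lt,
    div_lt_div_iff₀ (by positivity) (by positivity)]
  linarith [sq_add_three_mul_sub_two_lt_add_one_mul_sqrt hd]

theorem pqcm_gt_uqcm (d : ℤ) (hd : 2 ≤ d) :
    1 / (d : ℝ) + (1 / (4 * d)) * (d - 2 + Real.sqrt (d ^ 2 + 4 * d - 4)) >
      ((d : ℝ) + 3) / (2 * (d + 1)) :=
  pqcm_fidelity_gt_uqcm_fidelity (by exact_mod_cast hd)
end

section
/- For integers 0 ≤ n < N and p ∈ [0,1], the tail probability P(X > n) of a binomial random variable X with parameters N and p satisfies P(X > n) = I_p(n+1, N-n), where I_x(a,b) is the regularized incomplete beta function. -/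
/-!
The tail `S(p) = ∑_{k>n} C(N,k) p^k (1-p)^(N-k)` is a sum of Bernstein polynomials `b_{N,k}`.
Since `b_{N,k}' = N (b_{N-1,k-1} - b_{N-1,k})`, the derivative of `S` telescopes to
`N b_{N-1,n}(p) = N C(N-1,n) p^n (1-p)^(N-n-1)`. With `S(0) = 0` this makes `S(p)` a constant multiple
of `∫_0^p t^n (1-t)^(N-n-1) dt`, and `S(1) = 1` identifies the constant as the reciprocal of the
complete integral.
-/

open Finset Polynomial

namespace bernsteinPolynomial

variable {R : Type*} [CommRing R]

theorem sum_Icc_derivative {N n : ℕ} (hn : n < N) :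
    ∑ k ∈ Icc (n + 1) N, derivative (bernsteinPolynomial R N k) =
      N * bernsteinPolynomial R (N - 1) n := by
  obtain ⟨M, rfl⟩ : ∃ M, N = M + 1 := ⟨N - 1, by omega⟩
  rw [← map_add_right_Icc n M 1, sum_map]
  have telescope : ∑ ν ∈ Icc n M,
      (bernsteinPolynomial R M ν - bernsteinPolynomial R M (ν + 1)) = bernsteinPolynomial R M n := by
    have h := sum_Icc_sub (by omega : n ≤ M) (fun ν => bernsteinPolynomial R M ν)
    rw [eq_zero_of_lt R (Nat.lt_succ_self M), zero_sub, ← neg_eq_iff_eq_neg, ← sum_neg_distrib] at h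
    simpa only [neg_sub] using h
  simp only [addRightEmbedding_apply, derivative_succ, ← mul_sum, telescope, Nat.add_sub_cancel]

theorem sum_Icc_eval_eq_mul_integral {N n : ℕ} (hn : n < N) (q : ℝ) :
    ∑ k ∈ Icc (n + 1) N, (bernsteinPolynomial ℝ N k).eval q =
      N * (N - 1).choose n * ∫ t in (0 : ℝ)..q, t ^ n * (1 - t) ^ (N - n - 1) := by
  set P := ∑ k ∈ Icc (n + 1) N, bernsteinPolynomial ℝ N k
  have hFTC : ∫ t in (0 : ℝ)..q, (derivative P).eval t = P.eval q - P.eval 0 :=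
    intervalIntegral.integral_eq_sub_of_hasDerivAt (fun t _ => P.hasDerivAt t)
      (P.derivative.continuous.intervalIntegrable _ _)
  have hP0 : P.eval 0 = 0 := by
    simp +contextual [P, eval_finsetSum, eval_at_0, Nat.pos_iff_ne_zero.mp]
  rw [derivative_sum, sum_Icc_derivative hn, hP0, sub_zero] at hFTC
  rw [← eval_finsetSum, ← hFTC, ← intervalIntegral.integral_const_mul]
  simp [bernsteinPolynomial, Nat.sub_right_comm N 1 n, mul_assoc]

end bernsteinPolynomial

theorem binomial_tail_eq_regIncompleteBeta_general (N n : ℕ) (hn : n < N) (p : ℝ) :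
    (∑ k ∈ Finset.Icc (n + 1) N, (N.choose k : ℝ) * p ^ k * (1 - p) ^ (N - k)) =
      (∫ t in (0 : ℝ)..p, t ^ n * (1 - t) ^ (N - n - 1)) /
        (∫ t in (0 : ℝ)..1, t ^ n * (1 - t) ^ (N - n - 1)) := by
  have hsum_one : ∑ k ∈ Icc (n + 1) N, (bernsteinPolynomial ℝ N k).eval 1 = 1 := by
    simp [bernsteinPolynomial.eval_at_1, hn]
  have htail := bernsteinPolynomial.sum_Icc_eval_eq_mul_integral hn p
  have hnorm := bernsteinPolynomial.sum_Icc_eval_eq_mul_integral hn 1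
  rw [hsum_one] at hnorm
  simp only [bernsteinPolynomial, eval_mul, eval_pow, eval_sub, eval_natCast, eval_one, eval_X] at htail
  rw [eq_div_iff (right_ne_zero_of_mul_eq_one hnorm.symm)]
  linear_combination (∫ t in (0 : ℝ)..1, t ^ n * (1 - t) ^ (N - n - 1)) * htail -
    (∫ t in (0 : ℝ)..p, t ^ n * (1 - t) ^ (N - n - 1)) * hnorm

theorem binomial_tail_eq_regIncompleteBeta (N n : ℕ) (hn : n < N) (p : ℝ)
    (hp : p ∈ Set.Icc (0 : ℝ) 1) :
    (∑ k ∈ Finset.Icc (n + 1) N, (N.choose k : ℝ) * p ^ k * (1 - p) ^ (N - k)) =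
      (∫ t in (0 : ℝ)..p, t ^ n * (1 - t) ^ (N - n - 1)) /
        (∫ t in (0 : ℝ)..1, t ^ n * (1 - t) ^ (N - n - 1)) :=
  binomial_tail_eq_regIncompleteBeta_general N n hn p
end
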